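/- arXiv:2302.07425 — 2 statements merged into one kernel-verified Lean document; each statement's English description precedes it below -/
import Mathlib

section
/- In the bandit social learning model, suppose each agent t is η_t-pessimistic, i.e., Ind_{a,t} = max(0, μ̂_{a,t} − sqrt(η_t/n_{a,t})). Fix η ≥ max_t η_t and thresholds q₁, q₂ with sqrt(η/N₀) < q₁ < q₂. If the average of the first N₀ tape rewards of arm 1 is at most q₁ and the average of the first n tape rewards of arm 2 is at least q₂ for all n ∈ [T], then no agent ever chooses arm 1. -/
/-!
While every earlier agent has pulled arm `1`, arm `0` still has exactly its `N₀` initial samples,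
so its pessimistic index is at most `max 0 (q₁ - √(ηₜ/N₀))`, whereas arm `1`, with `N₀ + t`
samples, has index at least `q₂ - √(ηₜ/(N₀ + t))`. The confidence radius only shrinks with more
samples, and it stays below `√(η/N₀) < q₁ < q₂`, so arm `1` wins strictly; induction on `t`.
-/

/-- Number of samples of `arm` available to agent `t` (initial `N₀` samples
plus the pulls by agents in rounds `0,…,t−1`). -/
def numSamples (a : ℕ → Fin 2) (N₀ t : ℕ) (arm : Fin 2) : ℕ :=
  N₀ + ((Finset.range t).filter fun s => a s = arm).card

/-- Average of the first `n` tape rewards of `arm`. -/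
noncomputable def tapeAvg (tape : Fin 2 → ℕ → ℝ) (arm : Fin 2) (n : ℕ) : ℝ :=
  (∑ i ∈ Finset.range n, tape arm i) / n

lemma numSamples_of_forall_ne {a : ℕ → Fin 2} {N₀ t : ℕ} {arm : Fin 2}
    (h : ∀ s < t, a s ≠ arm) : numSamples a N₀ t arm = N₀ := by
  rw [numSamples, Finset.filter_false_of_mem fun s hs => h s (Finset.mem_range.mp hs),
    Finset.card_empty, add_zero]

lemma numSamples_of_forall_eq {a : ℕ → Fin 2} {N₀ t : ℕ} {arm : Fin 2}
    (h : ∀ s < t, a s = arm) : numSamples a N₀ t arm = N₀ + t := by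
  rw [numSamples, Finset.filter_true_of_mem fun s hs => h s (Finset.mem_range.mp hs),
    Finset.card_range]

lemma Real.sqrt_div_le_sqrt_div_of_le (x : ℝ) {m n : ℝ} (hm : 0 < m) (hmn : m ≤ n) :
    √(x / n) ≤ √(x / m) := by
  rw [Real.sqrt_div' x (hm.le.trans hmn), Real.sqrt_div' x hm.le]
  exact div_le_div_of_nonneg_left (Real.sqrt_nonneg x) (Real.sqrt_pos.mpr hm)
    (Real.sqrt_le_sqrt hmn)

lemma pessimistic_index_lt {η' η q₁ q₂ μ₁ μ₂ n₁ n₂ : ℝ} (hn₁ : 0 < n₁) (hn : n₁ ≤ n₂)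
    (hη : η' ≤ η) (hq₁ : √(η / n₁) < q₁) (hq : q₁ < q₂) (hμ₁ : μ₁ ≤ q₁) (hμ₂ : q₂ ≤ μ₂) :
    max 0 (μ₁ - √(η' / n₁)) < max 0 (μ₂ - √(η' / n₂)) := by
  have hradius : √(η' / n₂) ≤ √(η' / n₁) := Real.sqrt_div_le_sqrt_div_of_le η' hn₁ hn
  have hradius_small : √(η' / n₂) ≤ √(η / n₁) :=
    hradius.trans <| Real.sqrt_le_sqrt <| div_le_div_of_nonneg_right hη hn₁.le
  refine lt_max_of_lt_right (max_lt ?_ ?_) <;> linarith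

/-- Arm `0` is the good arm (arm 1 of the paper) and arm `1` the bad arm (arm 2). -/
theorem stmt_18_general (T N₀ : ℕ) (hN₀ : 1 ≤ N₀) (ηs : ℕ → ℝ)
    (η : ℝ) (hη : ∀ t < T, ηs t ≤ η)
    (tape : Fin 2 → ℕ → ℝ) (a : ℕ → Fin 2) (Ind : ℕ → Fin 2 → ℝ)
    (hPess : ∀ t < T, ∀ arm : Fin 2,
      Ind t arm = max 0 (tapeAvg tape arm (numSamples a N₀ t arm) -
        Real.sqrt (ηs t / (numSamples a N₀ t arm))))
    (hChoice : ∀ t < T, ∀ arm : Fin 2, Ind t arm ≤ Ind t (a t))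
    (q₁ q₂ : ℝ) (hq₁ : Real.sqrt (η / N₀) < q₁) (hq : q₁ < q₂)
    (hArm1 : tapeAvg tape 0 N₀ ≤ q₁)
    (hArm2 : ∀ n : ℕ, 1 ≤ n → n ≤ N₀ + T → q₂ ≤ tapeAvg tape 1 n) :
    ∀ t < T, a t ≠ 0 := by
  intro t
  induction t using Nat.strong_induction_on with
  | _ t ih =>
  intro ht hat
  have hprev : ∀ s < t, a s ≠ 0 := fun s hs => ih s hs (hs.trans ht)
  have hprev_one : ∀ s < t, a s = 1 := fun s hs => by have := hprev s hs; omega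
  have hchoice := hChoice t ht 1
  rw [hat, hPess t ht 0, hPess t ht 1, numSamples_of_forall_ne hprev,
    numSamples_of_forall_eq hprev_one] at hchoice
  exact hchoice.not_gt (pessimistic_index_lt (by exact_mod_cast hN₀) (by simp) (hη t ht) hq₁ hq
    hArm1 (hArm2 _ (by omega) (by omega)))

/-- Pessimistic agents: agent `t` is `ηs t`-pessimistic, i.e.
`Ind t arm = max 0 (μ̂ − sqrt(ηs t / n))`.  Arm `0` is the good arm (arm 1 of
the paper) and arm `1` the bad arm (arm 2). -/
theorem stmt_18 (T N₀ : ℕ) (hN₀ : 1 ≤ N₀) (ηs : ℕ → ℝ) (hηs : ∀ t, 0 ≤ ηs t)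
    (η : ℝ) (hη : ∀ t < T, ηs t ≤ η)
    (tape : Fin 2 → ℕ → ℝ) (a : ℕ → Fin 2) (Ind : ℕ → Fin 2 → ℝ)
    (hPess : ∀ t < T, ∀ arm : Fin 2,
      Ind t arm = max 0 (tapeAvg tape arm (numSamples a N₀ t arm) -
        Real.sqrt (ηs t / (numSamples a N₀ t arm))))
    (hChoice : ∀ t < T, ∀ arm : Fin 2, Ind t arm ≤ Ind t (a t))
    (q₁ q₂ : ℝ) (hq₁ : Real.sqrt (η / N₀) < q₁) (hq : q₁ < q₂)
    (hArm1 : tapeAvg tape 0 N₀ ≤ q₁)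
    (hArm2 : ∀ n : ℕ, 1 ≤ n → n ≤ N₀ + T → q₂ ≤ tapeAvg tape 1 n) :
    ∀ t < T, a t ≠ 0 :=
  stmt_18_general T N₀ hN₀ ηs η hη tape a Ind hPess hChoice q₁ q₂ hq₁ hq hArm1 hArm2
end

section
/- Let Δ ∈ (0,1), η > 2, and f = ⌈64η/Δ²⌉. Let (X_i)_{i≥1} be i.i.d. random variables in [0,1] with mean μ, and let μ̂_n = (1/n)Σ_{i=1}^n X_i. Then the probability that there exists n ≥ f with μ̂_n > μ + Δ/8 is at most C·exp(−c·η) for absolute constants C, c > 0. -/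
/-!
Centre the variables, `Yᵢ = Xᵢ - μ`. By Hoeffding's lemma each `Yᵢ` is sub-Gaussian with
parameter `1/4`. Since `E exp (t Yᵢ) ≥ 1` by Jensen, independence makes `exp (t (Y₁ + ⋯ + Yₖ))` a
nonnegative submartingale, so Doob's maximal inequality gives the maximal Hoeffding bound
`P (∃ k ≤ n, a ≤ Y₁ + ⋯ + Yₖ) ≤ exp (-a² / (2 n c))`.
If `ε n < Y₁ + ⋯ + Yₙ` for some `n ≥ f`, then `n` lies in a dyadic block `[f 2^r, f 2^(r+1))`, and
on that block the maximal bound is `exp (-ε² f 2^r / (4c)) ≤ exp (-η) ^ (r + 1)`; summing the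
geometric series over `r` gives `2 exp (-η)`.
-/

open MeasureTheory ProbabilityTheory Real Finset

open scoped NNReal

variable {Ω : Type*} {mΩ : MeasurableSpace Ω} {P : Measure Ω}

lemma one_le_mgf_of_integral_eq_zero [IsProbabilityMeasure P] {Y : Ω → ℝ} (hY : Integrable Y P)
    (h0 : ∫ ω, Y ω ∂P = 0) {t : ℝ} (hexp : Integrable (fun ω ↦ exp (t * Y ω)) P) :
    1 ≤ mgf Y P t := by
  have := convexOn_exp.map_integral_le continuous_exp.continuousOn isClosed_univ
    (ae_of_all _ fun _ ↦ Set.mem_univ _) (hY.const_mul t) hexp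
  simpa [mgf, integral_const_mul, h0] using this

lemma submartingale_exp_mul_sum [IsProbabilityMeasure P] {Y : ℕ → Ω → ℝ}
    (hY : ∀ i, StronglyMeasurable (Y i)) (hindep : iIndepFun Y P) {t : ℝ}
    (hint : ∀ i, Integrable (fun ω ↦ exp (t * Y i ω)) P) (hmgf : ∀ i, 1 ≤ mgf (Y i) P t) :
    Submartingale (fun n ω ↦ exp (t * ∑ i ∈ Icc 1 n, Y i ω)) (Filtration.natural Y hY) P := by
  set ℱ := Filtration.natural Y hY
  set Z : ℕ → Ω → ℝ := fun n ω ↦ exp (t * ∑ i ∈ Icc 1 n, Y i ω)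
  have hZ_meas : ∀ n, StronglyMeasurable[ℱ n] (Z n) := fun n ↦ by
    have hYn : ∀ i ≤ n, StronglyMeasurable[ℱ n] (Y i) := fun i hi ↦
      (Filtration.stronglyAdapted_natural hY i).mono (ℱ.mono hi)
    refine continuous_exp.comp_stronglyMeasurable (StronglyMeasurable.const_mul ?_ t)
    exact Finset.stronglyMeasurable_fun_sum _ fun i hi ↦ hYn i (mem_Icc.1 hi).2
  have hZ_int : ∀ n, Integrable (Z n) P := fun n ↦ by
    simpa [Z] using hindep.integrable_exp_mul_sum (fun i ↦ (hY i).measurable) (fun i _ ↦ hint i)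
  refine submartingale_of_setIntegral_le_succ hZ_meas hZ_int fun n s hs ↦ ?_
  have hsucc : Z (n + 1) = fun ω ↦ Z n ω * exp (t * Y (n + 1) ω) := by
    funext ω; simp only [Z, sum_Icc_succ_top (Nat.le_add_left 1 n), mul_add, exp_add]
  have hindep_succ : IndepFun (s.indicator (Z n)) (fun ω ↦ exp (t * Y (n + 1) ω)) P := by
    have : IndepFun (s.indicator (Z n)) (Y (n + 1)) P := by
      rw [IndepFun_iff_Indep]
      refine indep_of_indep_of_le_left
        (hindep.indep_comap_natural_of_lt hY (Nat.lt_succ_self n)).symm ?_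
      exact ((hZ_meas n).indicator hs).measurable.comap_le
    exact this.comp measurable_id (measurable_const.mul measurable_id).exp
  have hZ_nonneg : 0 ≤ ∫ ω in s, Z n ω ∂P :=
    setIntegral_nonneg_of_ae (ae_of_all _ fun _ ↦ (exp_pos _).le)
  calc ∫ ω in s, Z n ω ∂P ≤ (∫ ω in s, Z n ω ∂P) * mgf (Y (n + 1)) P t :=
        le_mul_of_one_le_right hZ_nonneg (hmgf _)
    _ = ∫ ω in s, Z (n + 1) ω ∂P := by
      rw [hsucc, ← integral_indicator (ℱ.le n s hs), ← integral_indicator (ℱ.le n s hs)]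
      simp only [Set.indicator_mul_left]
      exact (hindep_succ.integral_fun_mul_eq_mul_integral
        ((hZ_int n).indicator (ℱ.le n s hs)).aestronglyMeasurable
        (hint _).aestronglyMeasurable).symm

theorem measure_exists_le_sum_le_of_iIndepFun [IsProbabilityMeasure P] {Y : ℕ → Ω → ℝ}
    (hY : ∀ i, Measurable (Y i)) (hindep : iIndepFun Y P) {c : ℝ≥0}
    (hsub : ∀ i, HasSubgaussianMGF (Y i) c P) (hmean : ∀ i, ∫ ω, Y i ω ∂P = 0)
    {a : ℝ} (ha : 0 ≤ a) (n : ℕ) :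
    P {ω | ∃ k ≤ n, a ≤ ∑ i ∈ Icc 1 k, Y i ω} ≤ ENNReal.ofReal (exp (-a ^ 2 / (2 * n * c))) := by
  set t := a / (n * c)
  have ht : 0 ≤ t := by positivity
  set Z : ℕ → Ω → ℝ := fun k ω ↦ exp (t * ∑ i ∈ Icc 1 k, Y i ω)
  have hZ : Submartingale Z _ P := submartingale_exp_mul_sum (fun i ↦ (hY i).stronglyMeasurable)
    hindep (fun i ↦ (hsub i).integrable_exp_mul t)
    (fun i ↦ one_le_mgf_of_integral_eq_zero (hsub i).integrable (hmean i)
      ((hsub i).integrable_exp_mul t))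
  set ε : ℝ≥0 := ⟨exp (t * a), (exp_pos _).le⟩
  set E := {ω | (ε : ℝ) ≤ (range (n + 1)).sup' nonempty_range_add_one fun k ↦ Z k ω}
  have hsubset : {ω | ∃ k ≤ n, a ≤ ∑ i ∈ Icc 1 k, Y i ω} ⊆ E := by
    rintro ω ⟨k, hk, hak⟩
    refine le_trans ?_ (le_sup' (fun k ↦ Z k ω) (mem_range.2 (Nat.lt_succ_of_le hk)))
    exact exp_le_exp.2 (mul_le_mul_of_nonneg_left hak ht)
  have hmgf : ∫ ω, Z n ω ∂P ≤ exp (n * c * t ^ 2 / 2) := by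
    have := (HasSubgaussianMGF.sum_of_iIndepFun hindep (s := Icc 1 n) fun i _ ↦ hsub i).mgf_le t
    simpa [mgf, Z] using this
  have hdoob : ε * P E ≤ ENNReal.ofReal (exp (n * c * t ^ 2 / 2)) := by
    refine (maximal_ineq hZ (fun k ω ↦ (exp_pos _).le) n).trans (ENNReal.ofReal_le_ofReal ?_)
    exact (setIntegral_le_integral (hZ.integrable n) (ae_of_all _ fun ω ↦ (exp_pos _).le)).trans
      hmgf
  have hexponent : -(t * a) + n * c * t ^ 2 / 2 = -a ^ 2 / (2 * n * c) := by
    rcases eq_or_ne ((n : ℝ) * c) 0 with h | h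
    · simp [t, h, mul_assoc]
    · simp only [t]
      field_simp
      ring
  have hε : ENNReal.ofReal (exp (-(t * a))) * ε = 1 := by
    rw [← ENNReal.ofReal_coe_nnreal, ← ENNReal.ofReal_mul (exp_pos _).le]
    change ENNReal.ofReal (exp (-(t * a)) * exp (t * a)) = 1
    rw [← exp_add, neg_add_cancel, exp_zero, ENNReal.ofReal_one]
  calc P {ω | ∃ k ≤ n, a ≤ ∑ i ∈ Icc 1 k, Y i ω} ≤ P E := measure_mono hsubset
    _ = ENNReal.ofReal (exp (-(t * a))) * (ε * P E) := by rw [← mul_assoc, hε, one_mul]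
    _ ≤ ENNReal.ofReal (exp (-(t * a))) * ENNReal.ofReal (exp (n * c * t ^ 2 / 2)) := by gcongr
    _ = ENNReal.ofReal (exp (-a ^ 2 / (2 * n * c))) := by
      rw [← ENNReal.ofReal_mul (exp_pos _).le, ← exp_add, hexponent]

lemma exists_mul_two_pow_le_lt {f n : ℕ} (hf : 0 < f) (hn : f ≤ n) :
    ∃ r : ℕ, f * 2 ^ r ≤ n ∧ n < f * 2 ^ (r + 1) := by
  have hq : 1 ≤ n / f := (Nat.one_le_div_iff hf).2 hn
  refine ⟨Nat.log 2 (n / f), ?_, ?_⟩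
  · calc f * 2 ^ Nat.log 2 (n / f) ≤ f * (n / f) :=
          Nat.mul_le_mul_left f (Nat.pow_log_le_self 2 (by omega))
      _ ≤ n := Nat.mul_div_le n f
  · have := Nat.lt_pow_succ_log_self (by norm_num : 1 < 2) (n / f)
    calc n < f * (n / f + 1) := Nat.lt_mul_div_succ n hf
      _ ≤ f * 2 ^ (Nat.log 2 (n / f) + 1) := Nat.mul_le_mul_left f this

lemma exists_dyadic_le_of_mul_lt {S : ℕ → ℝ} {ε : ℝ} (hε : 0 ≤ ε) {f n : ℕ} (hf : 0 < f)
    (hn : f ≤ n) (h : ε * n < S n) :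
    ∃ r : ℕ, ∃ k ≤ 2 * (f * 2 ^ r), ε * (f * 2 ^ r : ℕ) ≤ S k := by
  obtain ⟨r, hlo, hhi⟩ := exists_mul_two_pow_le_lt hf hn
  refine ⟨r, n, by rw [pow_succ] at hhi; linarith, ?_⟩
  calc ε * (f * 2 ^ r : ℕ) ≤ ε * n := by gcongr
    _ ≤ S n := h.le

lemma tsum_ofReal_pow_succ_le {q : ℝ} (hq0 : 0 ≤ q) (hq : q ≤ 1 / 2) :
    ∑' r : ℕ, ENNReal.ofReal (q ^ (r + 1)) ≤ ENNReal.ofReal (2 * q) := by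
  have hq1 : q < 1 := by linarith
  have hsum : HasSum (fun r : ℕ ↦ q ^ (r + 1)) (q * (1 - q)⁻¹) := by
    simpa [pow_succ', mul_comm] using (hasSum_geometric_of_lt_one hq0 hq1).mul_left q
  rw [← ENNReal.ofReal_tsum_of_nonneg (fun r ↦ by positivity) hsum.summable, hsum.tsum_eq]
  refine ENNReal.ofReal_le_ofReal ?_
  rw [mul_comm 2 q]
  refine mul_le_mul_of_nonneg_left ?_ hq0
  rw [inv_le_comm₀ (by linarith) two_pos]
  linarith

theorem measure_exists_mul_lt_sum_le_of_iIndepFun [IsProbabilityMeasure P] {Y : ℕ → Ω → ℝ}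
    (hY : ∀ i, Measurable (Y i)) (hindep : iIndepFun Y P) {c : ℝ≥0}
    (hsub : ∀ i, HasSubgaussianMGF (Y i) c P) (hmean : ∀ i, ∫ ω, Y i ω ∂P = 0)
    {ε : ℝ} (hε : 0 ≤ ε) {f : ℕ} (hf : 0 < f) (hL : 1 ≤ ε ^ 2 * f / (4 * c)) :
    P {ω | ∃ n, f ≤ n ∧ ε * n < ∑ i ∈ Icc 1 n, Y i ω} ≤
      ENNReal.ofReal (2 * exp (-(ε ^ 2 * f / (4 * c)))) := by
  set L := ε ^ 2 * f / (4 * c)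
  have hc : (c : ℝ) ≠ 0 := by
    rintro h
    norm_num [L, h] at hL
  have hblock (r : ℕ) :
      P {ω | ∃ k ≤ 2 * (f * 2 ^ r), ε * (f * 2 ^ r : ℕ) ≤ ∑ i ∈ Icc 1 k, Y i ω} ≤
        ENNReal.ofReal (exp (-L) ^ (r + 1)) := by
    refine (measure_exists_le_sum_le_of_iIndepFun hY hindep hsub hmean (by positivity) _).trans
      (ENNReal.ofReal_le_ofReal ?_)
    have hr : (r : ℝ) + 1 ≤ 2 ^ r := by exact_mod_cast Nat.lt_two_pow_self
    have hexponent :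
        -(ε * (f * 2 ^ r : ℕ)) ^ 2 / (2 * (2 * (f * 2 ^ r) : ℕ) * c) = -(L * 2 ^ r) := by
      simp only [L]
      push_cast
      field_simp
      ring
    rw [← exp_nat_mul, exp_le_exp, hexponent]
    push_cast
    nlinarith
  have hq : exp (-L) ≤ 1 / 2 := by
    rw [exp_neg, inv_le_comm₀ (exp_pos _) (by norm_num), one_div, inv_inv]
    linarith [add_one_le_exp L]
  have hpeel : {ω | ∃ n, f ≤ n ∧ ε * n < ∑ i ∈ Icc 1 n, Y i ω} ⊆
      ⋃ r : ℕ, {ω | ∃ k ≤ 2 * (f * 2 ^ r), ε * (f * 2 ^ r : ℕ) ≤ ∑ i ∈ Icc 1 k, Y i ω} := by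
    rintro ω ⟨n, hn, h⟩
    exact Set.mem_iUnion.2 (exists_dyadic_le_of_mul_lt hε hf hn h)
  calc _ ≤ _ := measure_mono hpeel
    _ ≤ _ := measure_iUnion_le _
    _ ≤ ∑' r : ℕ, ENNReal.ofReal (exp (-L) ^ (r + 1)) := ENNReal.tsum_le_tsum hblock
    _ ≤ _ := tsum_ofReal_pow_succ_le (exp_pos _).le hq

theorem stmt_19 :
    ∃ C c : ℝ, 0 < C ∧ 0 < c ∧
      ∀ (Ω : Type) (m : MeasurableSpace Ω) (P : Measure Ω),
        IsProbabilityMeasure P →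
      ∀ (Δ η μ : ℝ), 0 < Δ → Δ < 1 → 2 < η →
      ∀ (X : ℕ → Ω → ℝ), (∀ i, Measurable (X i)) →
        iIndepFun X P →
        (∀ i, IdentDistrib (X i) (X 1) P P) →
        (∀ i, ∀ᵐ ω ∂P, X i ω ∈ Set.Icc (0:ℝ) 1) →
        (∀ i, ∫ ω, X i ω ∂P = μ) →
        P {ω | ∃ n : ℕ, ⌈64 * η / Δ ^ 2⌉₊ ≤ n ∧
            μ + Δ / 8 < (∑ i ∈ Finset.Icc 1 n, X i ω) / n} ≤
          ENNReal.ofReal (C * Real.exp (-c * η)) := by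
  refine ⟨2, 1, two_pos, one_pos, fun Ω _ P _ Δ η μ hΔ _ hη X hX hindep _ hb hμ ↦ ?_⟩
  set f := ⌈64 * η / Δ ^ 2⌉₊
  set Y : ℕ → Ω → ℝ := fun i ω ↦ X i ω - μ
  have hY_sub (i : ℕ) : HasSubgaussianMGF (Y i) (1 / 4) P := by
    convert hasSubgaussianMGF_of_mem_Icc (hX i).aemeasurable (hb i) using 1
    · simp [Y, hμ i]
    · ext
      norm_num
  have hY_mean (i : ℕ) : ∫ ω, Y i ω ∂P = 0 := by
    simp [Y, integral_sub (Integrable.of_mem_Icc 0 1 (hX i).aemeasurable (hb i)), hμ i]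
  have hL : η ≤ (Δ / 8) ^ 2 * f / (4 * ((1 / 4 : ℝ≥0) : ℝ)) := by
    have := Nat.le_ceil (64 * η / Δ ^ 2)
    rw [div_le_iff₀ (by positivity)] at this
    norm_num
    linarith
  have hsubset : {ω | ∃ n : ℕ, f ≤ n ∧ μ + Δ / 8 < (∑ i ∈ Icc 1 n, X i ω) / n} ⊆
      {ω | ∃ n, f ≤ n ∧ Δ / 8 * n < ∑ i ∈ Icc 1 n, Y i ω} := by
    rintro ω ⟨n, hn, hlt⟩
    refine ⟨n, hn, ?_⟩
    rw [lt_div_iff₀ (by exact_mod_cast (Nat.ceil_pos.2 (by positivity)).trans_le hn)] at hlt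
    simp only [Y, sum_sub_distrib, sum_const, Nat.card_Icc, add_tsub_cancel_right, nsmul_eq_mul]
    linarith
  calc _ ≤ _ := measure_mono hsubset
    _ ≤ _ := measure_exists_mul_lt_sum_le_of_iIndepFun (fun i ↦ (hX i).sub_const μ)
        (hindep.comp _ fun _ ↦ measurable_sub_const μ) hY_sub hY_mean (by positivity)
        (Nat.ceil_pos.2 (by positivity)) (by linarith)
    _ ≤ ENNReal.ofReal (2 * exp (-1 * η)) := by
      gcongr
      linarith
end
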